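/- arXiv:2304.11126 — 2 statements merged into one kernel-verified Lean document; each statement's English description precedes it below -/
import Mathlib

section
/- With the hypotheses below, the form ⟨v, w⟩ := B(v, T(conj w)) is Hermitian symmetric: for all v, w ∈ ℂⁿ one has ⟨v, w⟩ = conj(⟨w, v⟩). (It is complex-linear in the first slot and conjugate-linear in the second by construction.) -/
/-- With `B` a symmetric complex-bilinear form on `ℂⁿ` satisfying
`B (conj v) (conj w) = - conj (B v w)`, and `T` complex-linear with `T ∘ T = id`,
`T (conj v) = conj (T v)` and `B (T v) (T w) = - B v w`, the form
`⟨v, w⟩ := B v (T (conj w))` is Hermitian symmetric: `⟨v, w⟩ = conj ⟨w, v⟩`. -/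
theorem hermitian_symmetric {n : ℕ}
    (B : (Fin n → ℂ) →ₗ[ℂ] (Fin n → ℂ) →ₗ[ℂ] ℂ)
    (T : (Fin n → ℂ) →ₗ[ℂ] (Fin n → ℂ))
    (hB_symm : ∀ v w, B v w = B w v)
    (hB_conj : ∀ v w, B (star v) (star w) = - star (B v w))
    (hT2 : ∀ v, T (T v) = v)
    (hT_conj : ∀ v, T (star v) = star (T v))
    (hBT : ∀ v w, B (T v) (T w) = - B v w) :
    ∀ v w, B v (T (star w)) = star (B w (T (star v))) := by
  intro v w
  have h1 : star (B w (T (star v))) = - B (star w) (T v) := by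
    have := hB_conj w (T (star v))
    rw [hT_conj, star_star] at this
    rw [hT_conj]
    linear_combination this
  have h2 : B v (T (star w)) = - B (star w) (T v) := by
    have := hBT v (T (star w))
    rw [hT2] at this
    rw [hB_symm (star w) (T v)]
    linear_combination this
  rw [h1, h2]
end

section
/- Let V ⊆ ℂⁿ be a nonzero T-positive subspace. Then there exists v₁ ∈ V with T v₁ = conj v₁, B(v₁, v₁) = 1, B(v₁, T v₁) = 0, and B(T v₁, T v₁) = −1. -/
/-- The image of a complex subspace of `ℂⁿ` under coordinatewise complex conjugation,
as a complex subspace. -/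
noncomputable def conjSubmodule {n : ℕ} (V : Submodule ℂ (Fin n → ℂ)) :
    Submodule ℂ (Fin n → ℂ) where
  carrier := star '' (V : Set (Fin n → ℂ))
  add_mem' := by
    rintro _ _ ⟨a, ha, rfl⟩ ⟨b, hb, rfl⟩
    exact ⟨a + b, V.add_mem ha hb, by simp⟩
  zero_mem' := ⟨0, V.zero_mem, by simp⟩
  smul_mem' := by
    rintro c _ ⟨a, ha, rfl⟩
    exact ⟨(starRingEnd ℂ) c • a, V.smul_mem _ ha, by simp [star_smul]⟩

/-- A subspace `V ⊆ ℂⁿ` is `T`-positive (w.r.t. the bilinear form `B`) if `T(V) = conj(V)`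
and for every `v ∈ V` the number `B(v, T(conj v))` is a nonnegative real number,
strictly positive unless `v = 0`. -/
def IsTPositive {n : ℕ} (B : (Fin n → ℂ) →ₗ[ℂ] (Fin n → ℂ) →ₗ[ℂ] ℂ)
    (T : (Fin n → ℂ) →ₗ[ℂ] (Fin n → ℂ)) (V : Submodule ℂ (Fin n → ℂ)) : Prop :=
  Submodule.map T V = conjSubmodule V ∧
    ∀ v ∈ V, ∃ r : ℝ, 0 ≤ r ∧ B v (T (star v)) = (r : ℂ) ∧ (v ≠ 0 → 0 < r)

/-- Auxiliary: from a nonzero `w ∈ V` with `T w = star w` we get the desired vector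
by scaling. -/
lemma tpositive_aux {n : ℕ}
    (B : (Fin n → ℂ) →ₗ[ℂ] (Fin n → ℂ) →ₗ[ℂ] ℂ)
    (T : (Fin n → ℂ) →ₗ[ℂ] (Fin n → ℂ))
    (hB_symm : ∀ v w, B v w = B w v)
    (hBT : ∀ v w, B (T v) (T w) = - B v w)
    (hT_conj : ∀ v, T (star v) = star (T v))
    (V : Submodule ℂ (Fin n → ℂ))
    (hV : IsTPositive B T V)
    (w : Fin n → ℂ) (hw : w ∈ V) (hw0 : w ≠ 0) (hTw : T w = star w) :
    ∃ v₁ ∈ V, T v₁ = star v₁ ∧ B v₁ v₁ = 1 ∧ B v₁ (T v₁) = 0 ∧ B (T v₁) (T v₁) = -1 := by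
  obtain ⟨r, hr0, hBr, hrpos⟩ := hV.2 w hw
  have hrp : 0 < r := hrpos hw0
  have hTsw : T (star w) = w := by rw [hT_conj, hTw, star_star]
  have hBww : B w w = (r : ℂ) := by rw [hTsw] at hBr; exact hBr
  have hzero : B w (T w) = 0 := by
    have h1 := hBT w (star w)
    rw [hTw, hTsw, hB_symm (star w) w] at h1
    rw [hTw]
    linear_combination (1/2 : ℂ) * h1
  set c : ℝ := (Real.sqrt r)⁻¹ with hc_def
  have hc : c * c * r = 1 := by
    have h2 : Real.sqrt r * Real.sqrt r = r := Real.mul_self_sqrt hr0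
    rw [hc_def, ← mul_inv, h2]
    exact inv_mul_cancel₀ (ne_of_gt hrp)
  refine ⟨(c : ℂ) • w, V.smul_mem _ hw, ?_, ?_, ?_, ?_⟩
  · rw [map_smul, hTw, star_smul]
    simp [Complex.star_def, Complex.conj_ofReal]
  · simp only [map_smul, LinearMap.smul_apply, smul_eq_mul, hBww]
    have : (c : ℂ) * ((c : ℂ) * (r : ℂ)) = ((c * c * r : ℝ) : ℂ) := by push_cast; ring
    rw [this, hc]; norm_num
  · simp [map_smul, hzero, smul_eq_mul]
  · rw [hBT]
    simp only [map_smul, LinearMap.smul_apply, smul_eq_mul, hBww]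
    have : (c : ℂ) * ((c : ℂ) * (r : ℂ)) = ((c * c * r : ℝ) : ℂ) := by push_cast; ring
    rw [this, hc]; norm_num

/-- a nonzero `T`-positive subspace `V ⊆ ℂⁿ` contains a vector `v₁` with
`T v₁ = conj v₁`, `B(v₁, v₁) = 1`, `B(v₁, T v₁) = 0`, and `B(T v₁, T v₁) = -1`. -/
theorem tpositive_exists_unit_real_vector {n : ℕ}
    (B : (Fin n → ℂ) →ₗ[ℂ] (Fin n → ℂ) →ₗ[ℂ] ℂ)
    (T : (Fin n → ℂ) →ₗ[ℂ] (Fin n → ℂ))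
    (hB_symm : ∀ v w, B v w = B w v)
    (hB_conj : ∀ v w, B (star v) (star w) = - star (B v w))
    (hT2 : ∀ v, T (T v) = v)
    (hT_conj : ∀ v, T (star v) = star (T v))
    (hBT : ∀ v w, B (T v) (T w) = - B v w)
    (V : Submodule ℂ (Fin n → ℂ))
    (hV : IsTPositive B T V)
    (hV_ne : V ≠ ⊥) :
    ∃ v₁ ∈ V, T v₁ = star v₁ ∧ B v₁ v₁ = 1 ∧ B v₁ (T v₁) = 0 ∧ B (T v₁) (T v₁) = -1 := by
  obtain ⟨v, hv, hv0⟩ := Submodule.exists_mem_ne_zero_of_ne_bot hV_ne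
  -- star (T v) ∈ V
  have hTvV : star (T v) ∈ V := by
    have h1 : T v ∈ Submodule.map T V := Submodule.mem_map_of_mem hv
    rw [hV.1] at h1
    obtain ⟨a, ha, hae⟩ := h1
    rw [← hae, star_star]
    exact ha
  have hstarTv : T (star (T v)) = star v := by rw [hT_conj, hT2]
  by_cases h : v + star (T v) = 0
  · -- use w = I • (v - star (T v)) = (2I) • v ≠ 0
    refine tpositive_aux B T hB_symm hBT hT_conj V hV
      (Complex.I • (v - star (T v))) (V.smul_mem _ (V.sub_mem hv hTvV)) ?_ ?_
    · have hv' : star (T v) = -v := eq_neg_of_add_eq_zero_right h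
      rw [hv', sub_neg_eq_add]
      intro hcon
      apply hv0
      have : (Complex.I * 2) • v = 0 := by
        rw [← hcon]; module
      have h2 : (Complex.I * 2) ≠ 0 := by simp [Complex.I_ne_zero]
      exact (smul_eq_zero.mp this).resolve_left h2
    · rw [map_smul, map_sub, hstarTv, star_smul, star_sub, star_star]
      simp only [Complex.star_def, Complex.conj_I]
      rw [neg_smul, ← smul_neg]
      congr 1
      abel
  · refine tpositive_aux B T hB_symm hBT hT_conj V hV
      (v + star (T v)) (V.add_mem hv hTvV) h ?_
    rw [map_add, hstarTv, star_add, star_star]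
    abel
end
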